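/- Let $(X,Y)$ be jointly Gaussian with mean zero, unit variances, and correlation $\rho \in [-1,1]$, and let $Z = \sigma_s(X)\sigma_s(Y)$ where $\sigma_s(x) = (\max(0,x))^s$ for $s \in \mathbb{N}$. Then for any $t \geq 0$, $\Pr(Z > t) \leq \exp(-t^{1/s}/(1+\rho))$. -/

import Mathlib

/-!
If `Z > t` then `u := t ^ (1 / s) < max 0 X * max 0 Y`, so `X, Y > 0` and, by AM-GM,
`X + Y > 2 √u`. Under `jointGaussian ρ` the sum `X + Y` is `N(0, 2 (1 + ρ))`, and the
Gaussian Chernoff bound gives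
`P(X + Y ≥ 2 √u) ≤ exp (-(2 √u) ^ 2 / (4 (1 + ρ))) = exp (-u / (1 + ρ))`.
At `ρ = -1` the variance is `0`, and both exponents are `0` by the convention `x / 0 = 0`.
-/

open MeasureTheory ProbabilityTheory

/-- The law of a centered bivariate Gaussian with unit variances and correlation `ρ`. -/
noncomputable def jointGaussian (ρ : ℝ) : Measure (ℝ × ℝ) :=
  ((gaussianReal 0 1).prod (gaussianReal 0 1)).map
    (fun p => (p.1, ρ * p.1 + Real.sqrt (1 - ρ ^ 2) * p.2))

open Real Set
open scoped NNReal

lemma hasSubgaussianMGF_id_gaussianReal (v : ℝ≥0) :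
    HasSubgaussianMGF id v (gaussianReal 0 v) where
  integrable_exp_mul := integrable_exp_mul_gaussianReal
  mgf_le t := by simp [mgf_id_gaussianReal]

lemma gaussianReal_Ici_le (v : ℝ≥0) {a : ℝ} (ha : 0 ≤ a) :
    gaussianReal 0 v (Ici a) ≤ ENNReal.ofReal (exp (-a ^ 2 / (2 * v))) := by
  rw [← ofReal_measureReal]
  exact ENNReal.ofReal_le_ofReal ((hasSubgaussianMGF_id_gaussianReal v).measure_ge_le ha)

lemma gaussianReal_prod_map_linear (m₁ m₂ : ℝ) (v₁ v₂ : ℝ≥0) (a b : ℝ) :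
    ((gaussianReal m₁ v₁).prod (gaussianReal m₂ v₂)).map (fun q => a * q.1 + b * q.2) =
      gaussianReal (a * m₁ + b * m₂)
        (.mk (a ^ 2) (sq_nonneg a) * v₁ + .mk (b ^ 2) (sq_nonneg b) * v₂) := by
  have hcomp : (fun q : ℝ × ℝ => a * q.1 + b * q.2) =
      (fun q : ℝ × ℝ => q.1 + q.2) ∘ Prod.map (a * ·) (b * ·) := rfl
  rw [hcomp, ← Measure.map_map (by fun_prop) (by fun_prop),
    ← Measure.map_prod_map _ _ (by fun_prop) (by fun_prop), gaussianReal_map_const_mul,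
    gaussianReal_map_const_mul, ← gaussianReal_conv_gaussianReal]
  rfl

lemma jointGaussian_map_add {ρ : ℝ} (hρ : ρ ∈ Icc (-1 : ℝ) 1) :
    (jointGaussian ρ).map (fun p => p.1 + p.2) = gaussianReal 0 (2 * (1 + ρ)).toNNReal := by
  have hsq : sqrt (1 - ρ ^ 2) ^ 2 = 1 - ρ ^ 2 := sq_sqrt (by nlinarith [hρ.1, hρ.2])
  rw [jointGaussian, Measure.map_map (by fun_prop) (by fun_prop)]
  convert gaussianReal_prod_map_linear 0 0 1 1 (1 + ρ) (sqrt (1 - ρ ^ 2)) using 2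
  · ext q; simp only [Function.comp_apply]; ring
  · ring
  · ext
    rw [Real.coe_toNNReal _ (by linarith [hρ.1])]
    simp only [NNReal.coe_add, NNReal.coe_mul, NNReal.coe_mk, NNReal.coe_one, hsq]
    ring

lemma two_sqrt_lt_add_of_lt_max_mul_max {u x y : ℝ} (hu : 0 ≤ u)
    (h : u < max 0 x * max 0 y) : 2 * sqrt u < x + y := by
  have hx : 0 < x := by
    by_contra! hx
    rw [max_eq_left hx, zero_mul] at h
    linarith
  have hy : 0 < y := by
    by_contra! hy
    rw [max_eq_left hy, mul_zero] at h
    linarith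
  rw [max_eq_right hx.le, max_eq_right hy.le] at h
  refine lt_of_pow_lt_pow_left₀ 2 (by positivity) ?_
  rw [mul_pow, sq_sqrt hu]
  nlinarith [sq_nonneg (x - y)]

lemma two_sqrt_rpow_lt_add_of_lt_max_pow_mul_max_pow {s : ℕ} (hs : 0 < s) {t x y : ℝ}
    (ht : 0 ≤ t) (h : t < max 0 x ^ s * max 0 y ^ s) :
    2 * sqrt (t ^ ((1 : ℝ) / s)) < x + y := by
  rw [← mul_pow, ← rpow_natCast] at h
  refine two_sqrt_lt_add_of_lt_max_mul_max (rpow_nonneg ht _) ?_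
  rwa [one_div, rpow_inv_lt_iff_of_pos ht (by positivity) (by positivity)]

/-- For `(X,Y) ~ N(0, Σ_ρ)`, `Z = σ_s(X) σ_s(Y)` with `σ_s(x) = (max 0 x)^s`, and `t ≥ 0`,
`Pr(Z > t) ≤ exp(-t^(1/s)/(1+ρ))`. -/
theorem sigmaS_product_tail_bound (s : ℕ) (hs : 0 < s)
    (ρ : ℝ) (hρ : ρ ∈ Set.Icc (-1 : ℝ) 1) (t : ℝ) (ht : 0 ≤ t) :
    jointGaussian ρ {p : ℝ × ℝ | t < (max 0 p.1) ^ s * (max 0 p.2) ^ s} ≤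
      ENNReal.ofReal (Real.exp (-(t ^ ((1 : ℝ) / s)) / (1 + ρ))) := by
  set a := 2 * sqrt (t ^ ((1 : ℝ) / s)) with ha
  have hsub : {p : ℝ × ℝ | t < (max 0 p.1) ^ s * (max 0 p.2) ^ s} ⊆
      (fun p => p.1 + p.2) ⁻¹' Ici a :=
    fun p hp => (two_sqrt_rpow_lt_add_of_lt_max_pow_mul_max_pow hs ht hp).le
  calc _ ≤ jointGaussian ρ ((fun p => p.1 + p.2) ⁻¹' Ici a) := measure_mono hsub
    _ = gaussianReal 0 (2 * (1 + ρ)).toNNReal (Ici a) := by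
      rw [← jointGaussian_map_add hρ, Measure.map_apply (by fun_prop) measurableSet_Ici]
    _ ≤ ENNReal.ofReal (exp (-a ^ 2 / (2 * (2 * (1 + ρ)).toNNReal))) :=
      gaussianReal_Ici_le _ (by positivity)
    _ = _ := by
      rw [ha, mul_pow, sq_sqrt (rpow_nonneg ht _), Real.coe_toNNReal _ (by linarith [hρ.1]),
        show (2 : ℝ) * (2 * (1 + ρ)) = 4 * (1 + ρ) by ring, ← div_div]
      ring_nf
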